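/- Let N be compact and Σ controllable, and suppose there exist x ∈ N and S > 0 such that x ∈ A(x, τ) for every τ ≥ S. Then Σ is exact time controllable at every time t ≥ S + 2T, where T is a time realizing finite time controllability. -/

import Mathlib

open Set Manifold

/-- An abstract smooth control system `ẋ = f(x,u)` on a manifold `N` modelled on `(E,H)` via `I`,
with control set `U`.  `f u` is the vector field corresponding to the constant control `u`
(smooth, as part of the data), and `A x t` is the attainable set from `x` at exact time `t`
(for the chosen class of admissible inputs, which contains the constant inputs and is stable
under concatenation; this is reflected in the axioms `mem_zero` and `concat`). -/
structure ControlSystem {E : Type*} [NormedAddCommGroup E] [NormedSpace ℝ E]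
    {H : Type*} [TopologicalSpace H] (I : ModelWithCorners ℝ E H)
    (N : Type*) [TopologicalSpace N] [ChartedSpace H N] [IsManifold I (⊤ : ℕ∞) N]
    (U : Type*) where
  f : U → (x : N) → TangentSpace I x
  smooth : ∀ u, ContMDiff I I.tangent (⊤ : ℕ∞) (fun x => (⟨x, f u x⟩ : TangentBundle I N))
  A : N → ℝ → Set N
  mem_zero : ∀ x, x ∈ A x 0
  concat : ∀ {x y z : N} {s t : ℝ}, 0 ≤ s → 0 ≤ t → y ∈ A x s → z ∈ A y t → z ∈ A x (s + t)

namespace ControlSystem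

variable {E : Type*} [NormedAddCommGroup E] [NormedSpace ℝ E]
    {H : Type*} [TopologicalSpace H] {I : ModelWithCorners ℝ E H}
    {N : Type*} [TopologicalSpace N] [ChartedSpace H N] [IsManifold I (⊤ : ℕ∞) N] {U : Type*}

/-- Points attainable from `x` in time at most `t`. -/
def Ale (σ : ControlSystem I N U) (x : N) (t : ℝ) : Set N := ⋃ s ∈ Icc (0:ℝ) t, σ.A x s

/-- Exact-time attainable set of the time-reversed system: points that can be steered to `x`
in time exactly `t`. -/
def Arev (σ : ControlSystem I N U) (x : N) (t : ℝ) : Set N := {y | x ∈ σ.A y t}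

/-- Every point can be steered to every point in some finite time. -/
def Controllable (σ : ControlSystem I N U) : Prop := ∀ x y : N, ∃ t ≥ (0:ℝ), y ∈ σ.A x t

def FiniteTimeControllable (σ : ControlSystem I N U) : Prop :=
  ∃ T > (0:ℝ), ∀ x, σ.Ale x T = univ

def ExactTimeControllable (σ : ControlSystem I N U) : Prop :=
  ∃ t₀ > (0:ℝ), ∀ t ≥ t₀, ∀ x, σ.A x t = univ

end ControlSystem

/-! Steer `y` to `x` within time `T`, wait at `x` for the remaining time (every `τ ≥ S` is a
return time of `x`), then steer `x` to `z` within time `T`. -/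

namespace ControlSystem

variable {E : Type*} [NormedAddCommGroup E] [NormedSpace ℝ E]
    {H : Type*} [TopologicalSpace H] {I : ModelWithCorners ℝ E H}
    {N : Type*} [TopologicalSpace N] [ChartedSpace H N] [IsManifold I (⊤ : ℕ∞) N] {U : Type*}
    (σ : ControlSystem I N U)

theorem mem_Ale {x z : N} {t : ℝ} : z ∈ σ.Ale x t ↔ ∃ s ∈ Icc (0:ℝ) t, z ∈ σ.A x s :=
  mem_iUnion₂.trans <| by simp only [exists_prop]

theorem mem_A_of_mem_A_of_self_reachable {x y z : N} {S t₁ t₂ t : ℝ} (hS : 0 ≤ S)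
    (hx : ∀ τ ≥ S, x ∈ σ.A x τ) (ht₁ : 0 ≤ t₁) (ht₂ : 0 ≤ t₂)
    (hyx : x ∈ σ.A y t₁) (hxz : z ∈ σ.A x t₂) (ht : S + t₁ + t₂ ≤ t) : z ∈ σ.A y t := by
  have hwait : x ∈ σ.A x (t - t₁ - t₂) := hx _ (by linarith)
  have hyx' : x ∈ σ.A y (t₁ + (t - t₁ - t₂)) := σ.concat ht₁ (by linarith) hyx hwait
  have hyz := σ.concat (by linarith) ht₂ hyx' hxz
  rwa [show t₁ + (t - t₁ - t₂) + t₂ = t by ring] at hyz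

end ControlSystem

theorem exact_time_controllable_of_self_reachable_general {E : Type*} [NormedAddCommGroup E] [NormedSpace ℝ E]
    {H : Type*} [TopologicalSpace H] {I : ModelWithCorners ℝ E H}
    {N : Type*} [TopologicalSpace N] [ChartedSpace H N] [IsManifold I (⊤ : ℕ∞) N]
    {U : Type*}
    (σ : ControlSystem I N U)
    (x : N) (S : ℝ) (hS : 0 < S) (hx : ∀ τ ≥ S, x ∈ σ.A x τ)
    (T : ℝ) (hTC : ∀ y : N, σ.Ale y T = Set.univ) :
    ∀ t ≥ S + 2 * T, ∀ y : N, σ.A y t = Set.univ := by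
  intro t ht y
  refine eq_univ_of_forall fun z => ?_
  obtain ⟨t₁, ⟨ht₁, ht₁T⟩, hyx⟩ := σ.mem_Ale.1 (hTC y ▸ mem_univ x)
  obtain ⟨t₂, ⟨ht₂, ht₂T⟩, hxz⟩ := σ.mem_Ale.1 (hTC x ▸ mem_univ z)
  exact σ.mem_A_of_mem_A_of_self_reachable hS.le hx ht₁ ht₂ hyx hxz (by linarith)

/-- On a compact manifold, if `x ∈ A(x,τ)` for every `τ ≥ S` and `T` realizes
finite time controllability, then the system is exact time controllable at every `t ≥ S + 2T`. -/
theorem exact_time_controllable_of_self_reachable {E : Type*} [NormedAddCommGroup E] [NormedSpace ℝ E]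
    {H : Type*} [TopologicalSpace H] {I : ModelWithCorners ℝ E H}
    {N : Type*} [TopologicalSpace N] [ChartedSpace H N] [IsManifold I (⊤ : ℕ∞) N]
    [CompactSpace N] [ConnectedSpace N] {U : Type*}
    (σ : ControlSystem I N U) (hc : σ.Controllable)
    (x : N) (S : ℝ) (hS : 0 < S) (hx : ∀ τ ≥ S, x ∈ σ.A x τ)
    (T : ℝ) (hT : 0 < T) (hTC : ∀ y : N, σ.Ale y T = Set.univ) :
    ∀ t ≥ S + 2 * T, ∀ y : N, σ.A y t = Set.univ :=
  exact_time_controllable_of_self_reachable_general σ x S hS hx T hTC
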